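/- Let x ∈ ℝ^{M×K}, θ₀, μ ∈ ℝ^K, λ ∈ ℝ, and let θ^B ∈ {0,1}^K satisfy the qualifying-constraint sign conditions g_k(x, θ₀) ≤ 0 for every k with θ^B_k = 1 and g_k(x, θ₀) ≥ 0 for every k with θ^B_k = 0. Then for every θ ∈ [0,1]^K, L(x, θ, λ, μ) ≥ L(x, θ₀, λ, μ) + g(x, θ₀)ᵀ(θ^B − θ₀); that is, the Lagrangian linearized in θ about θ₀ and evaluated at the bound θ^B is a valid lower bound on the Lagrangian throughout the region defined by the qualifying constraints. -/
import Mathlib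


open Matrix

private lemma dot_id (M K : ℕ) (y : Fin M → ℝ) (x : Matrix (Fin M) (Fin K) ℝ)
    (θ₀ μ : Fin K → ℝ) (lam : ℝ) (v : Fin K → ℝ) :
    (fun k => -2 * xᵀ.mulVec y k + 2 * (xᵀ * x).mulVec θ₀ k - lam - μ k) ⬝ᵥ v
      = (∑ i, (-2 * (y i - x.mulVec θ₀ i) * x.mulVec v i))
        - lam * ∑ k, v k - ∑ k, μ k * v k := by
  simp only [dotProduct, Matrix.mulVec, Matrix.mul_apply, Matrix.transpose_apply,
    dotProduct, Finset.sum_mul, Finset.mul_sum, sub_mul, add_mul]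
  rw [Finset.sum_sub_distrib, Finset.sum_sub_distrib, Finset.sum_add_distrib,
    Finset.sum_comm]
  congr 1
  congr 1
  conv_lhs => enter [2, 2, k1]; rw [Finset.sum_comm]
  conv_lhs => enter [2]; rw [Finset.sum_comm]
  rw [← Finset.sum_add_distrib]
  apply Finset.sum_congr rfl
  intro i _
  rw [← Finset.sum_add_distrib]
  apply Finset.sum_congr rfl
  intro k _
  rw [mul_sub, sub_mul, Finset.mul_sum, Finset.sum_mul,
    sub_eq_add_neg, ← Finset.sum_neg_distrib]
  congr 1
  · ring
  · apply Finset.sum_congr rfl; intros; ring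


/-- Let `θ^B ∈ {0,1}^K` satisfy the qualifying-constraint sign conditions
`g_k(x, θ₀) ≤ 0` when `θ^B_k = 1` and `g_k(x, θ₀) ≥ 0` when `θ^B_k = 0`, where
`g(x, θ₀) = −2xᵀy + 2xᵀxθ₀ − λ1 − μ` is the gradient of the Lagrangian
`L(x, θ, λ, μ) = ‖y − xθ‖² − λ(1ᵀθ − 1) − μᵀθ` in `θ` at `θ₀`. Then for every
`θ ∈ [0,1]^K`, `L(x, θ, λ, μ) ≥ L(x, θ₀, λ, μ) + g(x, θ₀)ᵀ(θ^B − θ₀)`. -/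
theorem stmt_9 (M K : ℕ) (y : Fin M → ℝ) (x : Matrix (Fin M) (Fin K) ℝ)
    (θ₀ μ : Fin K → ℝ) (lam : ℝ) (θB : Fin K → ℝ)
    (hB : ∀ k, θB k = 0 ∨ θB k = 1)
    (h1 : ∀ k, θB k = 1 →
      -2 * xᵀ.mulVec y k + 2 * (xᵀ * x).mulVec θ₀ k - lam - μ k ≤ 0)
    (h0 : ∀ k, θB k = 0 →
      0 ≤ -2 * xᵀ.mulVec y k + 2 * (xᵀ * x).mulVec θ₀ k - lam - μ k)
    (θ : Fin K → ℝ) (hθ : ∀ k, θ k ∈ Set.Icc (0 : ℝ) 1) :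
    ((∑ i, (y i - x.mulVec θ₀ i) ^ 2) - lam * ((∑ k, θ₀ k) - 1) - ∑ k, μ k * θ₀ k)
      + (fun k => -2 * xᵀ.mulVec y k + 2 * (xᵀ * x).mulVec θ₀ k - lam - μ k) ⬝ᵥ (θB - θ₀)
      ≤ (∑ i, (y i - x.mulVec θ i) ^ 2) - lam * ((∑ k, θ k) - 1) - ∑ k, μ k * θ k := by
  set g : Fin K → ℝ := fun k =>
    -2 * xᵀ.mulVec y k + 2 * (xᵀ * x).mulVec θ₀ k - lam - μ k with hg
  -- step 1: g ⬝ᵥ (θB - θ₀) ≤ g ⬝ᵥ (θ - θ₀)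
  have step1 : g ⬝ᵥ (θB - θ₀) ≤ g ⬝ᵥ (θ - θ₀) := by
    apply Finset.sum_le_sum
    intro k _
    simp only [Pi.sub_apply]
    rcases hB k with h | h
    · have hgk : 0 ≤ g k := h0 k h
      have hk := (hθ k).1
      rw [h]
      nlinarith [mul_nonneg hgk hk]
    · have hgk : g k ≤ 0 := h1 k h
      have hk := (hθ k).2
      rw [h]
      nlinarith [mul_nonneg (neg_nonneg.mpr hgk) (sub_nonneg.mpr hk)]
  -- step 2: quadratic expansion
  have hmv : ∀ i, x.mulVec θ i = x.mulVec θ₀ i + x.mulVec (θ - θ₀) i := by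
    intro i
    rw [Matrix.mulVec_sub]
    simp
  have key : (∑ i, (y i - x.mulVec θ i) ^ 2) - lam * ((∑ k, θ k) - 1) - ∑ k, μ k * θ k
      = ((∑ i, (y i - x.mulVec θ₀ i) ^ 2) - lam * ((∑ k, θ₀ k) - 1) - ∑ k, μ k * θ₀ k)
        + g ⬝ᵥ (θ - θ₀) + ∑ i, (x.mulVec (θ - θ₀) i) ^ 2 := by
    rw [hg, dot_id]
    have e1 : ∑ i, (y i - x.mulVec θ i) ^ 2
        = ∑ i, ((y i - x.mulVec θ₀ i) ^ 2
            + (-2 * (y i - x.mulVec θ₀ i) * x.mulVec (θ - θ₀) i)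
            + (x.mulVec (θ - θ₀) i) ^ 2) := by
      apply Finset.sum_congr rfl
      intro i _
      rw [hmv i]
      ring
    rw [e1, Finset.sum_add_distrib, Finset.sum_add_distrib]
    have e2 : ∑ k, (θ - θ₀) k = (∑ k, θ k) - ∑ k, θ₀ k := by
      simp [Finset.sum_sub_distrib]
    have e3 : ∑ k, μ k * (θ - θ₀) k = (∑ k, μ k * θ k) - ∑ k, μ k * θ₀ k := by
      simp [mul_sub, Finset.sum_sub_distrib]
    rw [e2, e3]
    ring
  calc ((∑ i, (y i - x.mulVec θ₀ i) ^ 2) - lam * ((∑ k, θ₀ k) - 1) - ∑ k, μ k * θ₀ k)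
        + g ⬝ᵥ (θB - θ₀)
      ≤ ((∑ i, (y i - x.mulVec θ₀ i) ^ 2) - lam * ((∑ k, θ₀ k) - 1) - ∑ k, μ k * θ₀ k)
        + g ⬝ᵥ (θ - θ₀) := by linarith
    _ ≤ _ := by
        rw [key]
        have : (0:ℝ) ≤ ∑ i, (x.mulVec (θ - θ₀) i) ^ 2 :=
          Finset.sum_nonneg fun i _ => sq_nonneg _
        linarith
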